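/- arXiv:2205.13371 — 4 statements merged into one kernel-verified Lean document; each statement's English description precedes it below -/
import Mathlib

section
/- For any tangent vector u ∈ T_x𝕃^n with ⟨u,u⟩_L > 0, the first coordinate of exp_x(u) = cosh(‖u‖_L)·x + sinh(‖u‖_L)·u/‖u‖_L is positive, so exp_x(u) lies in the upper sheet of the hyperboloid. -/
open Real

noncomputable section

/-- Lorentzian product on ℝ^{n+1}. -/
def lprod {n : ℕ} (x y : Fin (n+1) → ℝ) : ℝ :=
  -(x 0 * y 0) + ∑ i : Fin n, x i.succ * y i.succ

/-- The Lorentz model 𝕃^n. -/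
def lorentz {n : ℕ} : Set (Fin (n+1) → ℝ) := {x | lprod x x = -1 ∧ 0 < x 0}

/-- Lorentzian norm. -/
def lnorm {n : ℕ} (u : Fin (n+1) → ℝ) : ℝ := Real.sqrt (lprod u u)

/-- Exponential map of the Lorentz model. -/
def lexp {n : ℕ} (x u : Fin (n+1) → ℝ) : Fin (n+1) → ℝ :=
  Real.cosh (lnorm u) • x + (Real.sinh (lnorm u) / lnorm u) • u

/-- Parallel transport PT_{x→y}(v) = v + (⟨y - αx, v⟩_L/(α+1))·(x+y), α = -⟨x,y⟩_L. -/
def ptrans {n : ℕ} (x y v : Fin (n+1) → ℝ) : Fin (n+1) → ℝ :=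
  v + ((lprod (y - (-(lprod x y)) • x) v) / (-(lprod x y) + 1)) • (x + y)

/-- Origin of the Lorentz model. -/
def originL {n : ℕ} : Fin (n+1) → ℝ := Fin.cons 1 0

/-- Projection from the Lorentz model to the Poincaré ball. -/
def lproj {n : ℕ} (u : Fin (n+1) → ℝ) : Fin n → ℝ := fun i => u i.succ / (u 0 + 1)

/-- Inverse hyperbolic cosine. -/
def acosh (x : ℝ) : ℝ := Real.log (x + Real.sqrt (x^2 - 1))

/-! For a unit timelike `x` and a tangent vector `u`, the Cauchy–Schwarz inequality on the
spatial coordinates gives `|u₀| < ‖u‖_L x₀`. Hence, with `r = ‖u‖_L`,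
`exp_x(u)₀ = cosh r · x₀ + (sinh r / r) · u₀ > (cosh r - sinh r) · x₀ = e^{-r} x₀ > 0`. -/

lemma sum_succ_mul_eq_lprod_add {n : ℕ} (u v : Fin (n+1) → ℝ) :
    ∑ i : Fin n, u i.succ * v i.succ = lprod u v + u 0 * v 0 := by
  rw [lprod]; ring

lemma lexp_apply {n : ℕ} (x u : Fin (n+1) → ℝ) (i : Fin (n+1)) :
    lexp x u i = Real.cosh (lnorm u) * x i + Real.sinh (lnorm u) / lnorm u * u i := rfl

lemma sq_time_coord_add_lprod_le {n : ℕ} {x u : Fin (n+1) → ℝ}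
    (hx : lprod x x = -1) (hu : lprod u x = 0) :
    u 0 ^ 2 + lprod u u ≤ lprod u u * x 0 ^ 2 := by
  have hcs := Finset.sum_mul_sq_le_sq_mul_sq Finset.univ (fun i : Fin n => u i.succ)
    (fun i => x i.succ)
  simp only [sq (u _), sq (x _), sum_succ_mul_eq_lprod_add, hx, hu] at hcs
  nlinarith [hcs]

lemma neg_lnorm_mul_time_coord_lt {n : ℕ} {x u : Fin (n+1) → ℝ}
    (hx : lprod x x = -1) (hx0 : 0 < x 0) (hu : lprod u x = 0) (huu : 0 < lprod u u) :
    -(lnorm u * x 0) < u 0 := by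
  have hsq : u 0 ^ 2 < (lnorm u * x 0) ^ 2 := by
    rw [mul_pow, lnorm, Real.sq_sqrt huu.le]
    linarith [sq_time_coord_add_lprod_le hx hu]
  exact neg_lt_of_abs_lt (abs_lt_of_sq_lt_sq hsq (by unfold lnorm; positivity))

theorem lexp_first_coord_pos {n : ℕ} (x u : Fin (n+1) → ℝ)
    (hx : lprod x x = -1) (hx0 : 0 < x 0)
    (hu : lprod u x = 0) (huu : 0 < lprod u u) :
    0 < lexp x u 0 := by
  set r := lnorm u
  have hr : 0 < r := Real.sqrt_pos.mpr huu
  have hsinh : 0 < Real.sinh r / r := div_pos (Real.sinh_pos_iff.mpr hr) hr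
  calc 0 < Real.exp (-r) * x 0 := by positivity
    _ = Real.cosh r * x 0 + Real.sinh r / r * -(r * x 0) := by
      rw [← Real.cosh_sub_sinh]; field_simp; ring
    _ < lexp x u 0 := by
      rw [lexp_apply]
      gcongr
      exact neg_lnorm_mul_time_coord_lt hx hx0 hu huu
end
end

section
/- Parallel transport preserves the Lorentzian inner product: for x, y ∈ 𝕃^n and tangent vectors v, w ∈ T_x𝕃^n, letting α = -⟨x,y⟩_L and PT_{x→y}(v) := v + (⟨y - αx, v⟩_L/(α+1))·(x+y), one has ⟨PT_{x→y}(v), PT_{x→y}(w)⟩_L = ⟨v,w⟩_L. -/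
/-!
With `u = x + y` and `α = -⟨x,y⟩_L` one has `⟨u,u⟩_L = -2(α+1)`, and for `v ∈ T_x𝕃^n` also
`⟨u,v⟩_L = ⟨y,v⟩_L = ⟨y - αx, v⟩_L`. Hence on `T_x𝕃^n` the transport `PT_{x→y}` is the reflection
`v ↦ v - (2⟨u,v⟩_L/⟨u,u⟩_L) u` in `u^⊥`, and a reflection preserves any symmetric bilinear form.
-/

open Real

noncomputable section

section Reflection

variable {K V : Type*} [Field K] [AddCommGroup V] [Module K V]

/-- For `B u u = 0` the junk value `_ / 0 = 0` makes this the identity. -/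
def bilinReflection (B : LinearMap.BilinForm K V) (u v : V) : V :=
  v - (2 * B u v / B u u) • u

theorem LinearMap.BilinForm.IsSymm.apply_bilinReflection_bilinReflection
    {B : LinearMap.BilinForm K V} (hB : B.IsSymm) (u v w : V) :
    B (bilinReflection B u v) (bilinReflection B u w) = B v w := by
  by_cases huu : B u u = 0
  · simp [bilinReflection, huu]
  · simp only [bilinReflection, map_sub, map_smul, LinearMap.sub_apply, LinearMap.smul_apply,
      smul_eq_mul, hB.eq v u]
    field_simp
    ring

end Reflection

theorem lprod_comm {n : ℕ} (x y : Fin (n+1) → ℝ) : lprod x y = lprod y x := by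
  simp only [lprod, mul_comm]

theorem lprod_add_left {n : ℕ} (x y z : Fin (n+1) → ℝ) :
    lprod (x + y) z = lprod x z + lprod y z := by
  simp only [lprod, Pi.add_apply, add_mul, Finset.sum_add_distrib]
  ring

theorem lprod_smul_left {n : ℕ} (c : ℝ) (x y : Fin (n+1) → ℝ) :
    lprod (c • x) y = c * lprod x y := by
  simp only [lprod, Pi.smul_apply, smul_eq_mul, mul_assoc, ← Finset.mul_sum]
  ring

def lprodForm (n : ℕ) : LinearMap.BilinForm ℝ (Fin (n+1) → ℝ) :=
  LinearMap.mk₂ ℝ lprod lprod_add_left lprod_smul_left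
    (fun x y z => by simp only [lprod_comm x, lprod_add_left])
    (fun c x y => by simp only [lprod_comm x, lprod_smul_left, smul_eq_mul])

@[simp]
theorem lprodForm_apply {n : ℕ} (x y : Fin (n+1) → ℝ) : lprodForm n x y = lprod x y := rfl

theorem lprodForm_isSymm (n : ℕ) : (lprodForm n).IsSymm :=
  ⟨lprod_comm⟩

theorem ptrans_eq_bilinReflection {n : ℕ} {x y v : Fin (n+1) → ℝ}
    (hxx : lprod x x = -1) (hyy : lprod y y = -1) (hv : lprod v x = 0) :
    ptrans x y v = bilinReflection (lprodForm n) (x + y) v := by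
  have hxv : lprod x v = 0 := by rw [lprod_comm, hv]
  have hyx : lprod y x = lprod x y := lprod_comm y x
  have huu : lprodForm n (x + y) (x + y) = -2 * (-(lprod x y) + 1) := by
    simp only [map_add, LinearMap.add_apply, lprodForm_apply, hxx, hyy, hyx]
    ring
  have huv : lprodForm n (x + y) v = lprod (y - (-(lprod x y)) • x) v := by
    simp only [map_add, LinearMap.add_apply, lprodForm_apply, sub_eq_add_neg, lprod_add_left,
      ← neg_smul, lprod_smul_left, hxv]
    ring
  rw [ptrans, bilinReflection, huu, huv, sub_eq_add_neg v, ← neg_smul]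
  congr 2
  rw [neg_mul, div_neg, neg_neg, mul_div_mul_left _ _ two_ne_zero]

theorem ptrans_preserves_lprod {n : ℕ} (x y v w : Fin (n+1) → ℝ)
    (hx : x ∈ lorentz) (hy : y ∈ lorentz)
    (hv : lprod v x = 0) (hw : lprod w x = 0) :
    lprod (ptrans x y v) (ptrans x y w) = lprod v w := by
  rw [ptrans_eq_bilinReflection hx.1 hy.1 hv, ptrans_eq_bilinReflection hx.1 hy.1 hw]
  exact (lprodForm_isSymm n).apply_bilinReflection_bilinReflection (x + y) v w
end
end

section
/- (Proposition 2, explicit form) Let μ ∈ 𝕃^n, s ∈ ℝ^n nonzero, v := PT_{0_L→μ}([0,s]), c := √⟨v,v⟩_L > 0, and define the curve γ(t) := Proj(cosh(ct)·μ + sinh(ct)·v/c) in the Poincaré ball, where Proj(u) = u_{1:}/(u₀+1). Then the derivative of γ at t = 0 equals s/(μ₀+1); in particular the tangent vector of the projected curve at Proj(μ) is a positive scalar multiple of s. -/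
/-!
Transport from the origin gives `v = [A, s + A • μ_{1:}/(μ₀+1)]` with `A = ⟨μ_{1:}, s⟩`, and the
curve `cosh(ct)•μ + (sinh(ct)/c)•v` passes through `μ` with velocity `v` at `t = 0`. By the quotient
rule `Proj` then moves with velocity `(v_{1:}(μ₀+1) - μ_{1:} v₀)/(μ₀+1)²`, in which the `A`-terms
cancel, leaving `s/(μ₀+1)`.
-/

open Real

noncomputable section

theorem lprod_originL_left {n : ℕ} (y : Fin (n+1) → ℝ) : lprod originL y = -(y 0) := by
  simp [lprod, originL]

section ptransOrigin

variable {n : ℕ} (μ : Fin (n+1) → ℝ) (s : Fin n → ℝ)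

theorem lprod_ptrans_originL_coeff :
    lprod (μ - (-(lprod originL μ)) • originL) (Fin.cons 0 s) = ∑ i : Fin n, μ i.succ * s i := by
  simp [lprod, originL]

theorem ptrans_originL_apply_zero (hμ : μ 0 + 1 ≠ 0) :
    ptrans originL μ (Fin.cons 0 s) 0 = ∑ i : Fin n, μ i.succ * s i := by
  rw [ptrans, lprod_ptrans_originL_coeff, lprod_originL_left]
  simp only [Pi.add_apply, Pi.smul_apply, smul_eq_mul, Fin.cons_zero, originL]
  field_simp
  ring

theorem ptrans_originL_apply_succ (i : Fin n) :
    ptrans originL μ (Fin.cons 0 s) i.succ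
      = s i + (∑ j : Fin n, μ j.succ * s j) / (μ 0 + 1) * μ i.succ := by
  rw [ptrans, lprod_ptrans_originL_coeff, lprod_originL_left]
  simp [originL]

end ptransOrigin

theorem hasDerivAt_cosh_smul_add_sinh_div_smul {E : Type*} [NormedAddCommGroup E]
    [NormedSpace ℝ E] (x w : E) {c : ℝ} (hc : c ≠ 0) :
    HasDerivAt (fun t : ℝ => Real.cosh (c * t) • x + (Real.sinh (c * t) / c) • w) w 0 := by
  have hct : HasDerivAt (fun t : ℝ => c * t) c 0 := by
    simpa using (hasDerivAt_id (0 : ℝ)).const_mul c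
  refine ((hct.cosh.smul_const x).add ((hct.sinh.div_const c).smul_const w)).congr_deriv ?_
  simp [hc]

theorem HasDerivAt.lproj {n : ℕ} {γ : ℝ → Fin (n+1) → ℝ} {γ' : Fin (n+1) → ℝ} {t : ℝ}
    (hγ : HasDerivAt γ γ' t) (hd : γ t 0 + 1 ≠ 0) :
    HasDerivAt (fun t => lproj (γ t))
      (fun i => (γ' i.succ * (γ t 0 + 1) - γ t i.succ * γ' 0) / (γ t 0 + 1) ^ 2) t :=
  hasDerivAt_pi.2 fun i =>
    (hasDerivAt_pi.1 hγ i.succ).div ((hasDerivAt_pi.1 hγ 0).add_const 1) hd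

theorem projected_geodesic_tangent_general {n : ℕ} (μ : Fin (n+1) → ℝ) (s : Fin n → ℝ)
    (hμ : μ ∈ lorentz)
    (v : Fin (n+1) → ℝ) (hv : v = ptrans originL μ (Fin.cons 0 s))
    (c : ℝ) (hcpos : 0 < c) :
    HasDerivAt (fun t : ℝ =>
        lproj (Real.cosh (c * t) • μ + (Real.sinh (c * t) / c) • v))
      (fun i : Fin n => s i / (μ 0 + 1)) 0 := by
  have hd : μ 0 + 1 ≠ 0 := by linarith [hμ.2]
  have hγ := (hasDerivAt_cosh_smul_add_sinh_div_smul μ v hcpos.ne').lproj (by simpa using hd)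
  simp only [mul_zero, Real.cosh_zero, Real.sinh_zero, zero_div, one_smul, zero_smul,
    add_zero] at hγ
  convert hγ using 2 with i
  rw [hv, ptrans_originL_apply_zero μ s hd, ptrans_originL_apply_succ]
  field_simp
  ring

theorem projected_geodesic_tangent {n : ℕ} (μ : Fin (n+1) → ℝ) (s : Fin n → ℝ)
    (hμ : μ ∈ lorentz) (hs : s ≠ 0)
    (v : Fin (n+1) → ℝ) (hv : v = ptrans originL μ (Fin.cons 0 s))
    (c : ℝ) (hc : c = Real.sqrt (lprod v v)) (hcpos : 0 < c) :
    HasDerivAt (fun t : ℝ =>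
        lproj (Real.cosh (c * t) • μ + (Real.sinh (c * t) / c) • v))
      (fun i : Fin n => s i / (μ 0 + 1)) 0 :=
  projected_geodesic_tangent_general μ s hμ v hv c hcpos
end
end

section
/- The rotation matrix formula gives an orthogonal matrix: for unit vectors x, y ∈ ℝ^n with ⟨x,y⟩ ≠ -1, the matrix R := I + K + K²/(1+⟨x,y⟩), where K := yᵀx - xᵀy is the skew-symmetric matrix with entries K_{ij} = y_i x_j - x_i y_j, satisfies Rᵀ R = I. -/
open Matrix

/-! The matrix `K = y xᵀ - x yᵀ` is skew-symmetric and satisfies `K³ = -(|x|²|y|² - ⟨x,y⟩²) K`,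
which for unit vectors is `K³ = -(1 - s²) K` with `s = ⟨x,y⟩`. Hence `Rᵀ = 1 - K + c K²` with
`c = 1/(1 + s)`, and in `Rᵀ R = 1 + (2c - 1) K² + c² K⁴` the cubic relation turns `K⁴` into
`-(1 - s²) K²`; the total coefficient `2c - 1 - c²(1 - s²) = c(1 + s) - 1` of `K²` vanishes. -/

section RotationFormula

variable {𝕜 A : Type*} [Field 𝕜] [Ring A] [Algebra 𝕜 A]

def rodrigues (s : 𝕜) (K : A) : A := 1 + K + (1 / (1 + s)) • (K * K)

theorem rodrigues_neg_mul_self {s : 𝕜} {K : A} (hs : 1 + s ≠ 0)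
    (hK : K * (K * K) = -(1 - s ^ 2) • K) :
    rodrigues s (-K) * rodrigues s K = 1 := by
  set c : 𝕜 := 1 / (1 + s)
  have hK4 : (K * K) * (K * K) = -(1 - s ^ 2) • (K * K) := by
    rw [mul_assoc, hK, mul_smul_comm]
  have hc : 2 * c - 1 + c * c * -(1 - s ^ 2) = 0 := by
    simp only [c]
    field_simp
    ring
  calc rodrigues s (-K) * rodrigues s K
      = 1 + (2 * c - 1) • (K * K) + (c * c) • ((K * K) * (K * K)) := by
        simp only [rodrigues, add_mul, mul_add, neg_mul, mul_neg, one_mul, mul_one,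
          smul_mul_assoc, mul_smul_comm, ← mul_assoc]
        module
    _ = 1 + (2 * c - 1 + c * c * -(1 - s ^ 2)) • (K * K) := by
        rw [hK4, smul_smul, add_assoc, ← add_smul]
    _ = 1 := by rw [hc, zero_smul, add_zero]

end RotationFormula

theorem transpose_rodrigues {n 𝕜 : Type*} [Fintype n] [DecidableEq n] [Field 𝕜] (s : 𝕜)
    (M : Matrix n n 𝕜) : (rodrigues s M)ᵀ = rodrigues s Mᵀ := by
  simp only [rodrigues, transpose_add, transpose_one, transpose_smul, transpose_mul]

section WedgeMatrix

variable {m R : Type*} [CommRing R]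

def wedgeMatrix (x y : m → R) : Matrix m m R := vecMulVec y x - vecMulVec x y

theorem transpose_wedgeMatrix (x y : m → R) : (wedgeMatrix x y)ᵀ = -wedgeMatrix x y := by
  rw [wedgeMatrix, transpose_sub, transpose_vecMulVec, transpose_vecMulVec, neg_sub]

theorem wedgeMatrix_mul_wedgeMatrix_mul_wedgeMatrix [Fintype m] (x y : m → R) :
    wedgeMatrix x y * (wedgeMatrix x y * wedgeMatrix x y) =
      -((x ⬝ᵥ x) * (y ⬝ᵥ y) - (x ⬝ᵥ y) ^ 2) • wedgeMatrix x y := by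
  simp only [wedgeMatrix, sub_mul, mul_sub, mul_smul_comm, vecMulVec_mul_vecMulVec,
    vecMulVec_smul, dotProduct_comm y x]
  module

end WedgeMatrix

theorem rotation_is_orthogonal {n : ℕ} (x y : Fin n → ℝ)
    (hx : ∑ i, (x i)^2 = 1) (hy : ∑ i, (y i)^2 = 1)
    (hxy : x ⬝ᵥ y ≠ -1) :
    (((1 : Matrix (Fin n) (Fin n) ℝ) + (vecMulVec y x - vecMulVec x y) +
        (1 / (1 + x ⬝ᵥ y)) • ((vecMulVec y x - vecMulVec x y) *
          (vecMulVec y x - vecMulVec x y)))ᵀ *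
      ((1 : Matrix (Fin n) (Fin n) ℝ) + (vecMulVec y x - vecMulVec x y) +
        (1 / (1 + x ⬝ᵥ y)) • ((vecMulVec y x - vecMulVec x y) *
          (vecMulVec y x - vecMulVec x y)))) = 1 := by
  have hxx : x ⬝ᵥ x = 1 := by simpa [dotProduct, sq] using hx
  have hyy : y ⬝ᵥ y = 1 := by simpa [dotProduct, sq] using hy
  have hs : 1 + x ⬝ᵥ y ≠ 0 := fun h => hxy (by linear_combination h)
  change (rodrigues (x ⬝ᵥ y) (wedgeMatrix x y))ᵀ * rodrigues (x ⬝ᵥ y) (wedgeMatrix x y) = 1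
  rw [transpose_rodrigues, transpose_wedgeMatrix]
  refine rodrigues_neg_mul_self hs ?_
  rw [wedgeMatrix_mul_wedgeMatrix_mul_wedgeMatrix, hxx, hyy, one_mul]
end
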